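/- arXiv:2003.12661 — 4 statements merged into one kernel-verified Lean document; each statement's English description precedes it below -/
import Mathlib

section
/- The overlap graph Ov(k) is strongly connected: for any two vertices ρ, τ ∈ S_{k−1} there is a directed path in Ov(k) from ρ to τ. -/
open Filter Finset
/-- The pattern of a tuple of distinct values: the unique permutation in the same
relative order. -/
def patOf {j : ℕ} (f : Fin j → ℕ) : Equiv.Perm (Fin j) := (Tuple.sort f)⁻¹

/-- The pattern induced by the first `k` entries of a permutation of size `k+1`.
In the overlap graph `Ov(k+1)` this is the source of the edge labeled `π`. -/
def firstPat {k : ℕ} (π : Equiv.Perm (Fin (k + 1))) : Equiv.Perm (Fin k) :=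
  patOf (fun i => (π i.castSucc : ℕ))

/-- The pattern induced by the last `k` entries of a permutation of size `k+1`.
In the overlap graph `Ov(k+1)` this is the target of the edge labeled `π`. -/
def lastPat {k : ℕ} (π : Equiv.Perm (Fin (k + 1))) : Equiv.Perm (Fin k) :=
  patOf (fun i => (π i.succ : ℕ))

/-! Write `ρ` followed by a copy of `τ` shifted above all values of `ρ`: a sequence of `2k`
distinct numbers. Its `k + 1` windows of length `k` have patterns starting at `ρ` and ending
at `τ`, and two consecutive windows are the first and last `k` entries of a window of length
`k + 1`, whose pattern is an edge of `Ov(k+1)` joining them. -/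

open Equiv Function Relation

theorem patOf_eq_of_lt_iff {j : ℕ} {f : Fin j → ℕ} (σ : Perm (Fin j))
    (h : ∀ a b, σ a < σ b ↔ f a < f b) : patOf f = σ := by
  have hmono : StrictMono (f ∘ ⇑σ⁻¹) := fun x y hxy => by
    simpa only [comp_apply, ← h, Perm.coe_inv, apply_symm_apply] using hxy
  rw [patOf, inv_eq_iff_eq_inv, eq_comm, Tuple.eq_sort_iff]
  exact ⟨hmono.monotone, fun x y hxy hfxy => absurd hfxy (hmono hxy).ne⟩

theorem patOf_lt_patOf_iff {j : ℕ} {f : Fin j → ℕ} (hf : Injective f) (a b : Fin j) :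
    patOf f a < patOf f b ↔ f a < f b := by
  have hmono : StrictMono (f ∘ Tuple.sort f) :=
    (Tuple.monotone_sort f).strictMono_of_injective (hf.comp (Equiv.injective _))
  simpa [patOf] using
    (hmono.lt_iff_lt (a := (Tuple.sort f)⁻¹ a) (b := (Tuple.sort f)⁻¹ b)).symm

theorem patOf_patOf_comp {m n : ℕ} {g : Fin n → ℕ} (hg : Injective g) {e : Fin m → Fin n}
    (he : Injective e) : patOf (fun i => (patOf g (e i) : ℕ)) = patOf (g ∘ e) :=
  patOf_eq_of_lt_iff _ fun a b => by
    rw [patOf_lt_patOf_iff (hg.comp he), ← Fin.lt_def, patOf_lt_patOf_iff hg]; rfl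

theorem firstPat_patOf {k : ℕ} {g : Fin (k + 1) → ℕ} (hg : Injective g) :
    firstPat (patOf g) = patOf (g ∘ Fin.castSucc) :=
  patOf_patOf_comp hg (Fin.castSucc_injective k)

theorem lastPat_patOf {k : ℕ} {g : Fin (k + 1) → ℕ} (hg : Injective g) :
    lastPat (patOf g) = patOf (g ∘ Fin.succ) :=
  patOf_patOf_comp hg (Fin.succ_injective k)

def OverlapAdj {k : ℕ} (u v : Perm (Fin k)) : Prop :=
  ∃ π : Perm (Fin (k + 1)), firstPat π = u ∧ lastPat π = v

theorem overlapAdj_patOf {k : ℕ} {g : Fin (k + 1) → ℕ} (hg : Injective g) :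
    OverlapAdj (patOf (g ∘ Fin.castSucc)) (patOf (g ∘ Fin.succ)) :=
  ⟨patOf g, firstPat_patOf hg, lastPat_patOf hg⟩

def windowPat (f : ℕ → ℕ) (k j : ℕ) : Perm (Fin k) :=
  patOf fun i : Fin k => f (j + i)

theorem overlapAdj_windowPat_succ {f : ℕ → ℕ} {k j : ℕ}
    (hf : Set.InjOn f (Set.Iio (j + k + 1))) :
    OverlapAdj (windowPat f k j) (windowPat f k (j + 1)) := by
  set g : Fin (k + 1) → ℕ := fun i => f (j + i)
  have hg : Injective g := fun a b hab =>
    Fin.ext <| Nat.add_left_cancel (hf (Set.mem_Iio.2 (by omega)) (Set.mem_Iio.2 (by omega)) hab)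
  have hfirst : windowPat f k j = patOf (g ∘ Fin.castSucc) := rfl
  have hlast : windowPat f k (j + 1) = patOf (g ∘ Fin.succ) := by
    simp only [windowPat, g, comp_def, Fin.val_succ, ← add_assoc, add_right_comm j]
  rw [hfirst, hlast]
  exact overlapAdj_patOf hg

theorem reflTransGen_windowPat {f : ℕ → ℕ} {k n : ℕ} (hf : Set.InjOn f (Set.Iio (n + k))) :
    ReflTransGen OverlapAdj (windowPat f k 0) (windowPat f k n) := by
  induction n with
  | zero => exact .refl
  | succ n ih =>
    exact (ih (hf.mono (Set.Iio_subset_Iio (by omega)))).tail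
      (overlapAdj_windowPat_succ (hf.mono (Set.Iio_subset_Iio (by omega))))

def concatShift {k : ℕ} (ρ τ : Perm (Fin k)) (n : ℕ) : ℕ :=
  if h : n < k then ρ ⟨n, h⟩ else if h' : n - k < k then k + τ ⟨n - k, h'⟩ else 0

theorem concatShift_injOn {k : ℕ} (ρ τ : Perm (Fin k)) :
    Set.InjOn (concatShift ρ τ) (Set.Iio (k + k)) := by
  intro m hm n hn hmn
  simp only [Set.mem_Iio] at hm hn
  unfold concatShift at hmn
  split_ifs at hmn <;> try omega
  · simpa using ρ.injective (Fin.ext hmn)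
  · have := Fin.mk.inj_iff.1 (τ.injective (Fin.ext (Nat.add_left_cancel hmn)))
    omega

theorem windowPat_concatShift_zero {k : ℕ} (ρ τ : Perm (Fin k)) :
    windowPat (concatShift ρ τ) k 0 = ρ :=
  patOf_eq_of_lt_iff ρ fun a b => by simp [concatShift]

theorem windowPat_concatShift_self {k : ℕ} (ρ τ : Perm (Fin k)) :
    windowPat (concatShift ρ τ) k k = τ :=
  patOf_eq_of_lt_iff τ fun a b => by simp [concatShift]

/-- The overlap graph `Ov(k+1)` is strongly connected: any vertex `τ ∈ S_k` can be reached
from any vertex `ρ ∈ S_k` by a directed path, i.e. by repeatedly following edges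
(permutations `π ∈ S_{k+1}`, going from `firstPat π` to `lastPat π`). -/
theorem overlapGraph_stronglyConnected (k : ℕ) (ρ τ : Equiv.Perm (Fin k)) :
    Relation.ReflTransGen
      (fun u v : Equiv.Perm (Fin k) =>
        ∃ π : Equiv.Perm (Fin (k + 1)), firstPat π = u ∧ lastPat π = v) ρ τ := by
  have h := reflTransGen_windowPat (concatShift_injOn ρ τ)
  rwa [windowPat_concatShift_zero, windowPat_concatShift_self] at h
end

section
/- Every permutation σ of size m + k − 1 determines a walk of length m in the overlap graph Ov(k) whose i-th edge is labeled by the pattern induced by σ(i)…σ(i+k−1); consequently, for each π ∈ S_k, cocc(π,σ) equals the number of edges of this walk labeled π. -/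
open Filter Finset

/-- The value of the permutation `σ` at a natural-number index (junk value `0` out of range). -/
def papp {n : ℕ} (σ : Equiv.Perm (Fin n)) (j : ℕ) : ℕ :=
  if h : j < n then (σ ⟨j, h⟩ : ℕ) else 0

/-- The number of consecutive occurrences of the pattern `π` in `σ`:
the number of intervals `i, i+1, …, i+k-1` of indices such that `σ` restricted to them
is in the same relative order as `π`. -/
def cocc {k n : ℕ} (π : Equiv.Perm (Fin k)) (σ : Equiv.Perm (Fin n)) : ℕ :=
  ((Finset.range (n + 1 - k)).filter
    (fun i => ∀ a b : Fin k, π a < π b ↔ papp σ (i + (a : ℕ)) < papp σ (i + (b : ℕ)))).card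

/-- The direct sum `τ ⊕ σ` of two permutations: `τ(1)…τ(m)(σ(1)+m)…(σ(n)+m)`. -/
def dsum {m n : ℕ} (τ : Equiv.Perm (Fin m)) (σ : Equiv.Perm (Fin n)) :
    Equiv.Perm (Fin (m + n)) :=
  finSumFinEquiv.permCongr (Equiv.sumCongr τ σ)

lemma patOf_lt_iff {j : ℕ} {f : Fin j → ℕ} (hf : Function.Injective f) (a b : Fin j) :
    patOf f a < patOf f b ↔ f a < f b := by
  have hmono : StrictMono (f ∘ Tuple.sort f) :=
    (Tuple.monotone_sort f).strictMono_of_injective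
      (hf.comp (Tuple.sort f).injective)
  have h1 : f a = (f ∘ Tuple.sort f) (patOf f a) := by simp [patOf]
  have h2 : f b = (f ∘ Tuple.sort f) (patOf f b) := by simp [patOf]
  rw [h1, h2, hmono.lt_iff_lt]

lemma patOf_unique {j : ℕ} {f : Fin j → ℕ} (hf : Function.Injective f)
    (π : Equiv.Perm (Fin j)) (h : ∀ a b, π a < π b ↔ f a < f b) : π = patOf f := by
  have hmono : StrictMono (fun x => patOf f (π.symm x)) := by
    intro x y hxy
    rw [patOf_lt_iff hf, ← h]
    simpa using hxy
  have hsurj : Function.Surjective (fun x => patOf f (π.symm x)) :=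
    fun y => ⟨π ((patOf f).symm y), by simp⟩
  have hid := Fin.coe_orderIso_apply (StrictMono.orderIsoOfSurjective _ hmono hsurj)
  refine Equiv.ext fun x => ?_
  have := hid (π x)
  simp only [StrictMono.coe_orderIsoOfSurjective] at this
  simp only [Equiv.symm_apply_apply] at this
  exact Fin.ext this.symm

lemma patOf_congr {j : ℕ} {f g : Fin j → ℕ} (hg : Function.Injective g)
    (h : ∀ a b, f a < f b ↔ g a < g b) : patOf f = patOf g := by
  have hf : Function.Injective f := by
    intro a b hab
    apply hg
    have h1 := (h a b).not.1 (by omega)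
    have h2 := (h b a).not.1 (by omega)
    omega
  exact patOf_unique hg (patOf f) fun a b => (patOf_lt_iff hf a b).trans (h a b)

/-- Every permutation `σ` of size `m + (k+1) − 1` determines a walk of length `m` in the
overlap graph `Ov(k+1)` (a list of `m` edges, i.e. permutations in `S_{k+1}`, with the target
of each edge equal to the source of the next) whose `i`-th edge is the pattern induced by
`σ(i)…σ(i+k)`; consequently, for every `π ∈ S_{k+1}`, `cocc(π,σ)` is the number of edges of
this walk labeled `π`. -/
theorem walk_of_permutation (k m : ℕ) (σ : Equiv.Perm (Fin (m + k))) :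
    ∃ w : List (Equiv.Perm (Fin (k + 1))),
      w.length = m ∧
      w.Chain' (fun a b => lastPat a = firstPat b) ∧
      (∀ i : ℕ, i < m →
        w[i]? = some (patOf (fun a : Fin (k + 1) => papp σ (i + (a : ℕ))))) ∧
      ∀ π : Equiv.Perm (Fin (k + 1)), cocc π σ = w.count π := by
  set g : ℕ → Equiv.Perm (Fin (k + 1)) :=
    fun i => patOf (fun a : Fin (k + 1) => papp σ (i + (a : ℕ))) with hg
  have hinj : ∀ i, i < m → Function.Injective (fun a : Fin (k + 1) => papp σ (i + (a : ℕ))) := by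
    intro i hi a b hab
    have ha : i + (a : ℕ) < m + k := by omega
    have hb : i + (b : ℕ) < m + k := by omega
    simp only [papp, ha, hb, dif_pos] at hab
    have := σ.injective (Fin.ext hab)
    have : i + (a : ℕ) = i + (b : ℕ) := congrArg Fin.val this
    exact Fin.ext (by omega)
  refine ⟨(List.range m).map g, by simp, ?_, ?_, ?_⟩
  · -- Chain'
    rw [List.Chain', List.isChain_map]
    cases m with
    | zero => simp
    | succ mm =>
      rw [List.isChain_range_succ]
      intro i hi
      show lastPat (g i) = firstPat (g (i + 1))
      have hfun1 : (fun a : Fin k => papp σ (i + ((a.succ : Fin (k+1)) : ℕ)))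
          = fun a : Fin k => papp σ ((i + 1) + (a : ℕ)) := by
        funext a
        congr 1
        simp [Fin.val_succ]
        omega
      have hfun2 : (fun a : Fin k => papp σ ((i + 1) + ((a.castSucc : Fin (k+1)) : ℕ)))
          = fun a : Fin k => papp σ ((i + 1) + (a : ℕ)) := by
        funext a
        simp
      have hinj' : Function.Injective (fun a : Fin k => papp σ ((i + 1) + (a : ℕ))) := by
        rw [← hfun2]
        exact (hinj (i+1) (by omega)).comp (Fin.castSucc_injective k)
      have h1 : lastPat (g i) = patOf (fun a : Fin k => papp σ ((i + 1) + (a : ℕ))) := by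
        unfold lastPat
        refine patOf_congr hinj' fun a b => ?_
        rw [← Fin.lt_iff_val_lt_val, hg, patOf_lt_iff (hinj i (by omega)),
          show i + ((a.succ : Fin (k+1)) : ℕ) = (i + 1) + (a : ℕ) by simp [Fin.val_succ]; omega,
          show i + ((b.succ : Fin (k+1)) : ℕ) = (i + 1) + (b : ℕ) by simp [Fin.val_succ]; omega]
      have h2 : firstPat (g (i + 1)) = patOf (fun a : Fin k => papp σ ((i + 1) + (a : ℕ))) := by
        unfold firstPat
        refine patOf_congr hinj' fun a b => ?_
        rw [← Fin.lt_iff_val_lt_val, hg, patOf_lt_iff (hinj (i + 1) (by omega))]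
        simp
      rw [h1, h2]
  · -- getElem
    intro i hi
    simp [List.getElem?_map, List.getElem?_range hi, hg]
  · -- count
    intro π
    have key : ∀ i, i < m →
        ((∀ a b : Fin (k+1), π a < π b ↔ papp σ (i + (a:ℕ)) < papp σ (i + (b:ℕ))) ↔ g i = π) := by
      intro i hi
      constructor
      · intro h
        exact (patOf_unique (hinj i hi) π h).symm
      · intro h a b
        rw [← h, hg, patOf_lt_iff (hinj i hi)]
    unfold cocc
    rw [show m + k + 1 - (k + 1) = m by omega]
    rw [Finset.filter_congr (fun i hi => key i (Finset.mem_range.1 hi))]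
    simp only [List.count, List.countP_map]
    simp [Finset.filter, Finset.card, Finset.range, Multiset.range, Multiset.filter_coe,
      List.countP_eq_length_filter, Function.comp, beq_iff_eq]
    congr 1
end

section
/- Let G be a directed multigraph and H its largest full subgraph (the subgraph consisting of all edges contained in some cycle, with their endpoints). Then dim P(G) = |E(H)| − |V(H)| + c(H) − 1, where c(H) is the number of connected components of H. -/
open Filter Finset

variable {V E : Type*}

/-- A (non-empty) closed directed walk in the directed multigraph with edge-source map `src`
and edge-target map `tgt`: a nonempty list of edges in which the target of each edge is the
source of the next, and the target of the last edge is the source of the first. -/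
def IsCycleWalk (src tgt : E → V) (c : List E) : Prop :=
  c ≠ [] ∧ c.Chain' (fun a b => tgt a = src b) ∧ c.getLast?.map tgt = c.head?.map src

/-- A simple cycle: a closed directed walk that does not repeat vertices. -/
def IsSimpleCycle (src tgt : E → V) (c : List E) : Prop :=
  IsCycleWalk src tgt c ∧ (c.map src).Nodup

/-- The normalized incidence vector `e_C` of a cycle `C`:
its coordinate at an edge `e` is (number of occurrences of `e` in `C`)/|C|. -/
noncomputable def cycleVec [DecidableEq E] (c : List E) : E → ℝ :=
  fun e => (c.count e : ℝ) / (c.length : ℝ)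

/-- The cycle polytope of a directed multigraph: the convex hull of the normalized incidence
vectors of its simple cycles. -/
noncomputable def cyclePolytope [DecidableEq E] (src tgt : E → V) : Set (E → ℝ) :=
  convexHull ℝ { x | ∃ c, IsSimpleCycle src tgt c ∧ x = cycleVec c }

/-- The edge set of the largest full subgraph `H` of `G`: all edges contained in some cycle. -/
def fullEdges (src tgt : E → V) : Set E :=
  { e | ∃ c, IsCycleWalk src tgt c ∧ e ∈ c }

/-- The vertex set of the largest full subgraph `H` of `G`: the endpoints of its edges. -/
def fullVertices (src tgt : E → V) : Set V :=
  { v | ∃ e ∈ fullEdges src tgt, src e = v ∨ tgt e = v }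

/-- Undirected adjacency on the vertices of `H` via the edges of `H`. -/
def fullAdj (src tgt : E → V) (a b : fullVertices src tgt) : Prop :=
  ∃ e ∈ fullEdges src tgt, (src e = a.1 ∧ tgt e = b.1) ∨ (src e = b.1 ∧ tgt e = a.1)

/-- The number of connected components of `H` (with respect to the underlying undirected
graph): the number of classes of vertices of `H` under the adjacency relation. -/
noncomputable def fullComponents (src tgt : E → V) : ℕ :=
  Nat.card (Quot (fullAdj src tgt))

/-!
Let `Z` be the space of real circulations of `G` supported on the edges of `H`. Every incidence
vector of a closed walk lies in `Z`, and conversely every element of `Z` is a combination of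
simple-cycle vectors: a nonnegative circulation contains a simple cycle in its support, so it can
be peeled off cycle by cycle, and an arbitrary one becomes nonnegative after adding a large
multiple of a sum of closed walks through every edge of `H`. Hence the simple-cycle vectors span
`Z`, whose dimension is the cycle rank `|E(H)| - |V(H)| + c(H)` of `H` (rank–nullity for the
incidence matrix of `H` and its transpose). The cycle vectors all lie on the hyperplane where the
coordinates sum to `1`, so their affine span has one dimension less.
-/

open Function Matrix Module

theorem finrank_vectorSpan_add_one {K M : Type*} [Field K] [AddCommGroup M] [Module K M]
    [FiniteDimensional K M] (f : M →ₗ[K] K) {S : Set M} (hS : ∀ x ∈ S, f x = 1) {p : M}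
    (hp : p ∈ S) : finrank K (vectorSpan K S) + 1 = finrank K (Submodule.span K S) := by
  have hle : vectorSpan K S ≤ Submodule.span K S := by
    rw [vectorSpan_def, Submodule.span_le]
    rintro _ ⟨x, hx, y, hy, rfl⟩
    exact Submodule.sub_mem _ (Submodule.subset_span hx) (Submodule.subset_span hy)
  have hsup : vectorSpan K S ⊔ K ∙ p = Submodule.span K S := by
    refine le_antisymm (sup_le hle ((Submodule.span_singleton_le_iff_mem _ _).mpr
      (Submodule.subset_span hp))) (Submodule.span_le.mpr fun x hx => ?_)
    exact Submodule.mem_sup.mpr ⟨x - p, vsub_mem_vectorSpan K hx hp, p,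
      Submodule.mem_span_singleton_self p, sub_add_cancel x p⟩
  have hker : vectorSpan K S ≤ LinearMap.ker f := by
    rw [vectorSpan_def, Submodule.span_le]
    rintro _ ⟨x, hx, y, hy, rfl⟩
    change f (x - y) = 0
    rw [map_sub, hS x hx, hS y hy, sub_self]
  have hinf : vectorSpan K S ⊓ K ∙ p = ⊥ := by
    rw [eq_bot_iff]
    rintro _ ⟨hx, hx'⟩
    obtain ⟨t, rfl⟩ := Submodule.mem_span_singleton.mp hx'
    have hf := LinearMap.mem_ker.mp (hker hx)
    rw [map_smul, hS p hp, smul_eq_mul, mul_one] at hf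
    rw [hf, zero_smul]
    exact Submodule.zero_mem _
  have hp0 : p ≠ 0 := fun h => by simpa [h] using hS p hp
  have := Submodule.finrank_sup_add_finrank_inf_eq (vectorSpan K S) (K ∙ p)
  rw [hsup, hinf, finrank_bot, finrank_span_singleton hp0] at this
  omega

section Walks

variable {src tgt : E → V}

theorem map_tgt_eq_of_isChain :
    ∀ {c : List E} (a : E), (a :: c).IsChain (fun a b => tgt a = src b) →
      (a :: c).map tgt = c.map src ++ [tgt ((a :: c).getLast (List.cons_ne_nil a c))]
  | [], _, _ => rfl
  | b :: c, a, h => by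
    rw [List.isChain_cons_cons] at h
    rw [List.map_cons, map_tgt_eq_of_isChain b h.2, h.1, List.getLast_cons_cons]
    rfl

theorem IsCycleWalk.map_tgt_perm {c : List E} (h : IsCycleWalk src tgt c) :
    (c.map tgt).Perm (c.map src) := by
  obtain ⟨hne, hchain, hclose⟩ := h
  obtain ⟨a, c, rfl⟩ := List.exists_cons_of_ne_nil hne
  rw [List.getLast?_eq_some_getLast (List.cons_ne_nil a c), Option.map_some, List.head?_cons,
    Option.map_some, Option.some_inj] at hclose
  rw [map_tgt_eq_of_isChain a hchain, hclose]
  exact List.perm_append_singleton _ _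

theorem isCycleWalk_map_range (f : ℕ → E) (n : ℕ)
    (hchain : ∀ k < n, tgt (f k) = src (f (k + 1))) (hclose : tgt (f n) = src (f 0)) :
    IsCycleWalk src tgt ((List.range (n + 1)).map f) := by
  refine ⟨by simp, ?_, ?_⟩
  · rw [List.Chain', List.isChain_map, List.isChain_range_succ]
    exact hchain
  · simp [List.getLast?_range, List.head?_range, hclose]

theorem IsCycleWalk.exists_src_eq_tgt {c : List E} (hc : IsCycleWalk src tgt c)
    {e : E} (he : e ∈ c) : ∃ e' ∈ c, src e' = tgt e := by
  obtain ⟨e', he', h⟩ := List.mem_map.mp (hc.map_tgt_perm.subset (List.mem_map_of_mem he))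
  exact ⟨e', he', h⟩

/-- Following successors from an edge of `A` eventually repeats a vertex; a repetition at minimal
distance closes a walk with distinct sources. -/
theorem exists_isSimpleCycle_of_forall_exists_succ [Finite V] {A : Set E} (hA : A.Nonempty)
    (hsucc : ∀ e ∈ A, ∃ e' ∈ A, src e' = tgt e) :
    ∃ d, IsSimpleCycle src tgt d ∧ ∀ e ∈ d, e ∈ A := by
  obtain ⟨a, ha⟩ := hA
  choose next hnextA hnext using hsucc
  let g : ℕ → A := fun k => (fun e : A => (⟨next e e.2, hnextA e e.2⟩ : A))^[k] ⟨a, ha⟩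
  have hg : ∀ k, src (g (k + 1)).1 = tgt (g k).1 := fun k => by
    simp only [g, Function.iterate_succ_apply']
    exact hnext _ _
  have hrep : ∃ n i, src (g i).1 = src (g (i + (n + 1))).1 := by
    obtain ⟨i, j, hij, heq⟩ := Finite.exists_ne_map_eq_of_infinite fun k => src (g k).1
    rcases hij.lt_or_gt with h | h
    · exact ⟨j - i - 1, i, by rwa [show i + (j - i - 1 + 1) = j by omega]⟩
    · exact ⟨i - j - 1, j, by rw [show j + (i - j - 1 + 1) = i by omega]; exact heq.symm⟩
  classical
  obtain ⟨i, hi⟩ := Nat.find_spec hrep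
  set n := Nat.find hrep
  refine ⟨(List.range (n + 1)).map fun k => (g (i + k)).1, ⟨?_, ?_⟩, ?_⟩
  · refine isCycleWalk_map_range _ n (fun k _ => (hg (i + k)).symm) ?_
    rw [← hg, add_zero, hi, add_assoc]
  · rw [List.map_map]
    refine List.nodup_range.map_on fun k hk l hl hkl => ?_
    rw [List.mem_range] at hk hl
    by_contra hne
    wlog hlt : k < l generalizing k l
    · exact this l hl k hk hkl.symm (Ne.symm hne) (by omega)
    refine Nat.find_min hrep (m := l - k - 1) (by omega) ⟨i + k, ?_⟩
    simpa [show i + k + (l - k - 1 + 1) = i + l by omega] using hkl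
  · intro e he
    obtain ⟨k, -, rfl⟩ := List.mem_map.mp he
    exact (g (i + k)).2

end Walks

theorem fullVertices_eq_image_src (src tgt : E → V) :
    fullVertices src tgt = src '' fullEdges src tgt := by
  ext v
  constructor
  · rintro ⟨e, he, rfl | rfl⟩
    · exact ⟨e, he, rfl⟩
    · obtain ⟨c, hc, hec⟩ := he
      obtain ⟨e', he', h⟩ := hc.exists_src_eq_tgt hec
      exact ⟨e', ⟨c, hc, he'⟩, h⟩
  · rintro ⟨e, he, rfl⟩
    exact ⟨e, he, Or.inl rfl⟩

theorem ncard_fullVertices_le [Finite E] (src tgt : E → V) :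
    (fullVertices src tgt).ncard ≤ (fullEdges src tgt).ncard :=
  fullVertices_eq_image_src src tgt ▸ Set.ncard_image_le (Set.toFinite _)

noncomputable def countVec {α : Type*} [DecidableEq α] (l : List α) : α → ℝ :=
  fun a => (l.count a : ℝ)

theorem countVec_nil {α : Type*} [DecidableEq α] : countVec ([] : List α) = 0 := by
  ext
  simp [countVec]

theorem countVec_cons {α : Type*} [DecidableEq α] (a : α) (l : List α) :
    countVec (a :: l) = Pi.single a 1 + countVec l := by
  ext b
  simp only [countVec, List.count_cons, beq_iff_eq, Pi.add_apply, Pi.single_apply]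
  split_ifs <;> simp_all [add_comm]

theorem sum_countVec {α : Type*} [Fintype α] [DecidableEq α] (l : List α) :
    ∑ a, countVec l a = l.length := by
  induction l with
  | nil => simp [countVec_nil]
  | cons a l ih => simp [countVec_cons, Finset.sum_add_distrib, ih, add_comm]

theorem cycleVec_eq_smul_countVec [DecidableEq E] (c : List E) :
    cycleVec c = (c.length : ℝ)⁻¹ • countVec c := by
  ext e
  simp [cycleVec, countVec, div_eq_inv_mul]

theorem IsSimpleCycle.countVec_apply [DecidableEq E] {src tgt : E → V} {d : List E}
    (hd : IsSimpleCycle src tgt d) (e : E) : countVec d e = if e ∈ d then 1 else 0 := by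
  rw [countVec, (hd.2.of_map src).count]
  split_ifs <;> simp

section Incidence

variable [DecidableEq V]

noncomputable def incidence (src tgt : E → V) : Matrix V E ℝ :=
  Matrix.of fun v e => (Pi.single (tgt e) 1 - Pi.single (src e) 1 : V → ℝ) v

noncomputable def circulations [Fintype E] (src tgt : E → V) : Submodule ℝ (E → ℝ) :=
  LinearMap.ker (incidence src tgt).mulVecLin

variable {src tgt : E → V}

theorem mem_circulations [Fintype E] {x : E → ℝ} :
    x ∈ circulations src tgt ↔ incidence src tgt *ᵥ x = 0 :=
  LinearMap.mem_ker

theorem incidence_mulVec_apply [Fintype E] (x : E → ℝ) (v : V) :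
    (incidence src tgt *ᵥ x) v = ∑ e with tgt e = v, x e - ∑ e with src e = v, x e := by
  simp [Matrix.mulVec, dotProduct, incidence, Pi.single_apply, sub_mul, Finset.sum_sub_distrib,
    Finset.sum_filter, eq_comm]

theorem incidence_mulVec_single [Fintype E] [DecidableEq E] (e : E) :
    incidence src tgt *ᵥ Pi.single e 1 = Pi.single (tgt e) 1 - Pi.single (src e) 1 := by
  ext v
  simp [incidence]

theorem incidence_transpose_mulVec [Fintype V] (y : V → ℝ) (e : E) :
    ((incidence src tgt)ᵀ *ᵥ y) e = y (tgt e) - y (src e) := by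
  simp [Matrix.mulVec, dotProduct, incidence, sub_mul, Finset.sum_sub_distrib, Pi.single_apply]

theorem incidence_mulVec_countVec [Fintype E] [DecidableEq E] (c : List E) :
    incidence src tgt *ᵥ countVec c = countVec (c.map tgt) - countVec (c.map src) := by
  induction c with
  | nil => simp [countVec_nil]
  | cons a c ih =>
    simp only [countVec_cons, List.map_cons, Matrix.mulVec_add, incidence_mulVec_single, ih]
    abel

theorem IsCycleWalk.countVec_mem_circulations [Fintype E] [DecidableEq E] {c : List E}
    (hc : IsCycleWalk src tgt c) : countVec c ∈ circulations src tgt := by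
  rw [mem_circulations, incidence_mulVec_countVec, sub_eq_zero]
  ext v
  exact congrArg Nat.cast (hc.map_tgt_perm.count_eq v)

end Incidence

noncomputable def simpleCycleVecs [DecidableEq E] (src tgt : E → V) : Set (E → ℝ) :=
  { x | ∃ c, IsSimpleCycle src tgt c ∧ x = cycleVec c }

theorem IsSimpleCycle.countVec_mem_span [DecidableEq E] {src tgt : E → V} {d : List E}
    (hd : IsSimpleCycle src tgt d) :
    countVec d ∈ Submodule.span ℝ (simpleCycleVecs src tgt) := by
  have hlen : (d.length : ℝ) ≠ 0 := by simpa using hd.1.1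
  rw [← smul_inv_smul₀ hlen (countVec d), ← cycleVec_eq_smul_countVec]
  exact Submodule.smul_mem _ _ (Submodule.subset_span ⟨d, hd, rfl⟩)

theorem simpleCycleVecs_nonempty_of_mem_fullEdges [Finite V] [DecidableEq E] {src tgt : E → V}
    {e : E} (he : e ∈ fullEdges src tgt) : (simpleCycleVecs src tgt).Nonempty := by
  obtain ⟨c, hc, hec⟩ := he
  obtain ⟨d, hd, -⟩ := exists_isSimpleCycle_of_forall_exists_succ (A := {e | e ∈ c})
    ⟨e, hec⟩ fun _ he => hc.exists_src_eq_tgt he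
  exact ⟨cycleVec d, d, hd, rfl⟩

theorem sum_cycleVec [Fintype E] [DecidableEq E] {c : List E} (hc : c ≠ []) :
    ∑ e, cycleVec c e = 1 := by
  have hlen : (c.length : ℝ) ≠ 0 := by simpa using hc
  simp only [cycleVec_eq_smul_countVec, Pi.smul_apply, smul_eq_mul, ← Finset.mul_sum,
    sum_countVec, inv_mul_cancel₀ hlen]

theorem vectorSpan_cyclePolytope [DecidableEq E] (src tgt : E → V) :
    vectorSpan ℝ (cyclePolytope src tgt) = vectorSpan ℝ (simpleCycleVecs src tgt) := by
  rw [cyclePolytope, ← direction_affineSpan, affineSpan_convexHull, direction_affineSpan]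
  rfl

theorem mem_range_extendByZero_val_iff {F : Set E} {x : E → ℝ} :
    x ∈ LinearMap.range (ExtendByZero.linearMap ℝ ((↑) : F → E)) ↔
      ∀ e ∉ F, x e = 0 := by
  constructor
  · rintro ⟨z, rfl⟩ e he
    exact extend_apply' _ _ _ fun ⟨a, ha⟩ => he (ha ▸ a.2)
  · intro hx
    refine ⟨fun e => x e, funext fun e => ?_⟩
    by_cases he : e ∈ F
    · exact Subtype.val_injective.extend_apply (fun e : F => x e) 0 ⟨e, he⟩
    · rw [ExtendByZero.linearMap_apply,
        extend_apply' _ _ _ fun ⟨a, ha⟩ => he (ha ▸ a.2), hx e he, Pi.zero_apply]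

section SimpleCycleSpan

variable [Fintype E] [DecidableEq V] {src tgt : E → V}

theorem exists_succ_pos_of_nonneg {x : E → ℝ} (hx : x ∈ circulations src tgt) (h0 : 0 ≤ x)
    {e : E} (he : 0 < x e) : ∃ e', 0 < x e' ∧ src e' = tgt e := by
  have hv := congrFun (mem_circulations.mp hx) (tgt e)
  rw [incidence_mulVec_apply, Pi.zero_apply, sub_eq_zero] at hv
  have hout : 0 < ∑ e' with src e' = tgt e, x e' :=
    hv ▸ he.trans_le (Finset.single_le_sum (fun i _ => h0 i) (by simp))
  obtain ⟨e', he', hne⟩ := Finset.exists_ne_zero_of_sum_ne_zero hout.ne'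
  exact ⟨e', (h0 e').lt_of_ne' hne, (Finset.mem_filter.mp he').2⟩

theorem exists_isSimpleCycle_of_nonneg [Finite V] {x : E → ℝ} (hx : x ∈ circulations src tgt)
    (h0 : 0 ≤ x) {e : E} (he : 0 < x e) :
    ∃ d, IsSimpleCycle src tgt d ∧ ∀ e ∈ d, 0 < x e :=
  exists_isSimpleCycle_of_forall_exists_succ (A := {e | 0 < x e}) ⟨e, he⟩ fun _ he =>
    exists_succ_pos_of_nonneg hx h0 he

/-- Subtracting the largest multiple of a simple cycle in the support keeps a nonnegative
circulation and kills at least one edge. -/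
theorem mem_span_of_nonneg [Finite V] [DecidableEq E] {x : E → ℝ}
    (hx : x ∈ circulations src tgt) (h0 : 0 ≤ x) :
    x ∈ Submodule.span ℝ (simpleCycleVecs src tgt) := by
  induction hn : #{e | x e ≠ 0} using Nat.strong_induction_on generalizing x with
  | _ n ih =>
  rcases eq_or_ne x 0 with rfl | hne
  · exact zero_mem _
  obtain ⟨e₀, he₀⟩ := Function.ne_iff.mp hne
  obtain ⟨d, hd, hdpos⟩ := exists_isSimpleCycle_of_nonneg hx h0 ((h0 e₀).lt_of_ne' he₀)
  obtain ⟨m, hm, hmin⟩ := d.toFinset.exists_min_image x <| by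
    obtain ⟨e, he⟩ := List.exists_mem_of_ne_nil d hd.1.1
    exact ⟨e, List.mem_toFinset.mpr he⟩
  rw [List.mem_toFinset] at hm
  set y := x - x m • countVec d with hy
  have hy_apply : ∀ e, y e = if e ∈ d then x e - x m else x e := fun e => by
    simp only [hy, Pi.sub_apply, Pi.smul_apply, hd.countVec_apply, smul_eq_mul]
    split_ifs <;> ring
  have hy0 : 0 ≤ y := fun e => by
    rw [hy_apply]
    split_ifs with he
    · exact sub_nonneg.mpr (hmin e (List.mem_toFinset.mpr he))
    · exact h0 e
  have hsupp : (univ.filter fun e => y e ≠ 0) ⊂ univ.filter fun e => x e ≠ 0 := by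
    refine Finset.ssubset_iff_of_subset (fun e => ?_) |>.mpr ⟨m, ?_, ?_⟩
    · simp only [Finset.mem_filter, Finset.mem_univ, true_and, hy_apply]
      split_ifs with he
      · exact fun _ => (hdpos e he).ne'
      · exact id
    · simpa using (hdpos m hm).ne'
    · simp [hy_apply, hm]
  have hyspan := ih _ (hn ▸ Finset.card_lt_card hsupp) (x := y)
    (Submodule.sub_mem _ hx (Submodule.smul_mem _ _ hd.1.countVec_mem_circulations)) hy0 rfl
  rw [show x = y + x m • countVec d by rw [hy, sub_add_cancel]]
  exact Submodule.add_mem _ hyspan (Submodule.smul_mem _ _ hd.countVec_mem_span)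

/-- Adding a large multiple of a sum of closed walks through all edges of `H` makes a circulation
supported on `H` nonnegative. -/
theorem mem_span_of_mem_circulations [Finite V] [DecidableEq E] {x : E → ℝ}
    (hx : x ∈ circulations src tgt) (hF : ∀ e ∉ fullEdges src tgt, x e = 0) :
    x ∈ Submodule.span ℝ (simpleCycleVecs src tgt) := by
  classical
  choose C hC hmem using fun e : fullEdges src tgt => e.2
  set u := ∑ e : fullEdges src tgt, countVec (C e) with hu
  have hu_circ : u ∈ circulations src tgt :=
    Submodule.sum_mem _ fun e _ => (hC e).countVec_mem_circulations
  have hu0 : 0 ≤ u := fun a => by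
    rw [hu, Finset.sum_apply]
    exact Finset.sum_nonneg fun e _ => Nat.cast_nonneg _
  have hu1 : ∀ e ∈ fullEdges src tgt, 1 ≤ u e := fun e he => by
    rw [hu, Finset.sum_apply]
    calc (1 : ℝ) ≤ countVec (C ⟨e, he⟩) e := by
          exact Nat.one_le_cast.mpr (List.one_le_count_iff.mpr (hmem ⟨e, he⟩))
      _ ≤ _ := Finset.single_le_sum (f := fun e' => countVec (C e') e)
          (fun e' _ => Nat.cast_nonneg _) (Finset.mem_univ _)
  set s := ∑ e, |x e|
  have hs : ∀ e, |x e| ≤ s := fun e =>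
    Finset.single_le_sum (f := fun e => |x e|) (fun e _ => abs_nonneg _) (Finset.mem_univ e)
  have hy0 : 0 ≤ x + s • u := fun e => by
    simp only [Pi.add_apply, Pi.smul_apply, smul_eq_mul, Pi.zero_apply]
    by_cases he : e ∈ fullEdges src tgt
    · nlinarith [hu1 e he, hs e, neg_abs_le (x e), abs_nonneg (x e)]
    · rw [hF e he, zero_add]
      exact mul_nonneg ((abs_nonneg _).trans (hs e)) (hu0 e)
  have hyspan := mem_span_of_nonneg (Submodule.add_mem _ hx (Submodule.smul_mem _ s hu_circ)) hy0
  rw [← add_sub_cancel_right x (s • u)]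
  exact Submodule.sub_mem _ hyspan (Submodule.smul_mem _ _ (mem_span_of_nonneg hu_circ hu0))

theorem span_simpleCycleVecs [Finite V] [DecidableEq E] :
    Submodule.span ℝ (simpleCycleVecs src tgt) = circulations src tgt ⊓
      LinearMap.range (ExtendByZero.linearMap ℝ ((↑) : fullEdges src tgt → E)) := by
  refine le_antisymm (Submodule.span_le.mpr ?_) fun x ⟨hx, hF⟩ =>
    mem_span_of_mem_circulations hx (mem_range_extendByZero_val_iff.mp hF)
  rintro _ ⟨c, hc, rfl⟩
  refine ⟨?_, mem_range_extendByZero_val_iff.mpr fun e he => ?_⟩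
  · rw [cycleVec_eq_smul_countVec]
    exact Submodule.smul_mem _ _ hc.1.countVec_mem_circulations
  · have : e ∉ c := fun hec => he ⟨c, hc.1, hec⟩
    simp [cycleVec, List.count_eq_zero_of_not_mem this]

end SimpleCycleSpan

def undirectedAdj (src tgt : E → V) (a b : V) : Prop :=
  ∃ e, (src e = a ∧ tgt e = b) ∨ (src e = b ∧ tgt e = a)

section Rank

variable [Fintype V] [DecidableEq V] (src tgt : E → V)

theorem ker_incidence_transpose :
    LinearMap.ker (incidence src tgt)ᵀ.mulVecLin =
      LinearMap.range (LinearMap.funLeft ℝ ℝ (Quot.mk (undirectedAdj src tgt))) := by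
  ext y
  rw [LinearMap.mem_ker, LinearMap.mem_range]
  constructor
  · intro hy
    have hy' : ∀ e, y (tgt e) = y (src e) := fun e => by
      have := congrFun hy e
      rwa [Matrix.mulVecLin_apply, incidence_transpose_mulVec, Pi.zero_apply, sub_eq_zero] at this
    refine ⟨Quot.lift y ?_, rfl⟩
    rintro a b ⟨e, ⟨rfl, rfl⟩ | ⟨rfl, rfl⟩⟩
    · exact (hy' e).symm
    · exact hy' e
  · rintro ⟨g, rfl⟩
    ext e
    rw [Matrix.mulVecLin_apply, incidence_transpose_mulVec, LinearMap.funLeft_apply,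
      LinearMap.funLeft_apply, Pi.zero_apply, sub_eq_zero,
      Quot.sound (r := undirectedAdj src tgt) ⟨e, Or.inr ⟨rfl, rfl⟩⟩]

/-- Rank–nullity for the incidence matrix and its transpose; the kernel of the transpose consists
of the functions that are constant on connected components. -/
theorem finrank_circulations_add_card [Fintype E] :
    finrank ℝ (circulations src tgt) + Nat.card V =
      Nat.card E + Nat.card (Quot (undirectedAdj src tgt)) := by
  have := Fintype.ofFinite (Quot (undirectedAdj src tgt))
  have hM := LinearMap.finrank_range_add_finrank_ker (incidence src tgt).mulVecLin
  have hMt := LinearMap.finrank_range_add_finrank_ker (incidence src tgt)ᵀ.mulVecLin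
  have hrank : (incidence src tgt)ᵀ.rank = (incidence src tgt).rank := Matrix.rank_transpose _
  rw [ker_incidence_transpose, LinearMap.finrank_range_of_inj
    (LinearMap.funLeft_injective_of_surjective _ _ _ Quot.mk_surjective)] at hMt
  simp only [finrank_fintype_fun_eq_card] at hM hMt
  rw [Matrix.rank, Matrix.rank] at hrank
  rw [circulations, Nat.card_eq_fintype_card, Nat.card_eq_fintype_card, Nat.card_eq_fintype_card]
  omega

end Rank

theorem extendByZero_single {R ι η : Type*} [Semiring R] [DecidableEq ι] [DecidableEq η]
    {s : ι → η} (hs : Injective s) (i : ι) (r : R) :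
    ExtendByZero.linearMap R s (Pi.single i r) = Pi.single (s i) r := by
  ext j
  rw [ExtendByZero.linearMap_apply]
  by_cases h : ∃ i', s i' = j
  · obtain ⟨i', rfl⟩ := h
    rw [hs.extend_apply]
    simp only [Pi.single_apply, hs.eq_iff]
  · rw [extend_apply' _ _ _ h, Pi.zero_apply,
      Pi.single_eq_of_ne (fun hj => h ⟨i, hj.symm⟩)]

section Induced

variable (src tgt : E → V) (F : Set E)

def endpoints : Set V := {v | ∃ e ∈ F, src e = v ∨ tgt e = v}

def inducedSrc : F → endpoints src tgt F := fun e => ⟨src e, e, e.2, Or.inl rfl⟩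

def inducedTgt : F → endpoints src tgt F := fun e => ⟨tgt e, e, e.2, Or.inr rfl⟩

variable [Fintype E] [Fintype F] [DecidableEq E] [DecidableEq V]

theorem incidence_comp_extendByZero :
    (incidence src tgt).mulVecLin ∘ₗ ExtendByZero.linearMap ℝ ((↑) : F → E) =
      ExtendByZero.linearMap ℝ ((↑) : endpoints src tgt F → V) ∘ₗ
        (incidence (inducedSrc src tgt F) (inducedTgt src tgt F)).mulVecLin := by
  refine LinearMap.pi_ext' fun e => LinearMap.ext_ring ?_
  simp only [LinearMap.comp_apply, LinearMap.single_apply, Matrix.mulVecLin_apply,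
    extendByZero_single Subtype.val_injective, incidence_mulVec_single, map_sub]
  rfl

theorem map_circulations_induced :
    (circulations (inducedSrc src tgt F) (inducedTgt src tgt F)).map
        (ExtendByZero.linearMap ℝ ((↑) : F → E)) =
      circulations src tgt ⊓ LinearMap.range (ExtendByZero.linearMap ℝ ((↑) : F → E)) := by
  rw [inf_comm, ← Submodule.map_comap_eq, circulations, circulations, ← LinearMap.ker_comp,
    incidence_comp_extendByZero, LinearMap.ker_comp_of_ker_eq_bot _
      (LinearMap.ker_eq_bot.mpr (extend_injective Subtype.val_injective (0 : V → ℝ)))]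

end Induced

theorem undirectedAdj_inducedSrc_fullEdges (src tgt : E → V) :
    undirectedAdj (inducedSrc src tgt (fullEdges src tgt))
      (inducedTgt src tgt (fullEdges src tgt)) = fullAdj src tgt := by
  ext a b
  simp [undirectedAdj, fullAdj, inducedSrc, inducedTgt, Subtype.ext_iff]

theorem finrank_span_simpleCycleVecs_add_ncard [Fintype V] [Fintype E] [DecidableEq E]
    (src tgt : E → V) :
    finrank ℝ (Submodule.span ℝ (simpleCycleVecs src tgt)) + (fullVertices src tgt).ncard =
      (fullEdges src tgt).ncard + fullComponents src tgt := by
  classical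
  have h := finrank_circulations_add_card (inducedSrc src tgt (fullEdges src tgt))
    (inducedTgt src tgt (fullEdges src tgt))
  rw [undirectedAdj_inducedSrc_fullEdges, Nat.card_coe_set_eq, Nat.card_coe_set_eq] at h
  rwa [span_simpleCycleVecs, ← map_circulations_induced, ← (Submodule.equivMapOfInjective _
    (extend_injective Subtype.val_injective (0 : E → ℝ)) _).finrank_eq]

/-- For a finite directed multigraph `G` with largest full subgraph `H`,
`dim P(G) = |E(H)| − |V(H)| + c(H) − 1` where `c(H)` is the number of connected
components of `H`. -/
theorem cyclePolytope_dim
    [Fintype V] [Fintype E] [DecidableEq E] (src tgt : E → V) :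
    Module.finrank ℝ (vectorSpan ℝ (cyclePolytope src tgt))
      = (fullEdges src tgt).ncard - (fullVertices src tgt).ncard
          + fullComponents src tgt - 1 := by
  have hdim := finrank_span_simpleCycleVecs_add_ncard src tgt
  rw [vectorSpan_cyclePolytope]
  rcases (simpleCycleVecs src tgt).eq_empty_or_nonempty with hS | ⟨p, hp⟩
  · have hE : fullEdges src tgt = ∅ := Set.eq_empty_of_forall_notMem fun e he =>
      (simpleCycleVecs_nonempty_of_mem_fullEdges he).ne_empty hS
    rw [fullVertices_eq_image_src, hE, Set.image_empty, hS] at hdim ⊢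
    rw [Submodule.span_empty, finrank_bot] at hdim
    rw [vectorSpan_empty, finrank_bot]
    simp only [Set.ncard_empty] at hdim ⊢
    omega
  · have hV := ncard_fullVertices_le src tgt
    have hsum : ∀ x ∈ simpleCycleVecs src tgt,
        (∑ e, LinearMap.proj e : (E → ℝ) →ₗ[ℝ] ℝ) x = 1 := by
      rintro _ ⟨c, hc, rfl⟩
      simpa using sum_cycleVec hc.1.1
    have := finrank_vectorSpan_add_one _ hsum hp
    omega
end

section
/- The map H ↦ P(G)_H is an order-preserving bijection between the poset of full subgraphs of a directed multigraph G (ordered by inclusion of edge sets) and the face poset of the cycle polytope P(G). -/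
open Filter Finset

variable {V E : Type*}

/-- A set of edges `S` is a full subgraph if every edge of `S` lies on a directed cycle
using only edges of `S`. -/
def IsFullSubgraph (src tgt : E → V) (S : Set E) : Prop :=
  ∀ e ∈ S, ∃ c, IsCycleWalk src tgt c ∧ (∀ e' ∈ c, e' ∈ S) ∧ e ∈ c

/-- `P(G)_H`: the points of the cycle polytope vanishing outside the edge set of `H`. -/
noncomputable def polytopeRestrict [DecidableEq E] (src tgt : E → V) (S : Set E) :
    Set (E → ℝ) :=
  { x ∈ cyclePolytope src tgt | ∀ e ∉ S, x e = 0 }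

/-!
For every edge set `S`, the functional `x ↦ -∑_{e ∉ S} x e` is `≤ 0` on `P(G)` and vanishes exactly
on `P(G)_S`, so `P(G)_S` is an exposed face; it is the convex hull of the simple cycles inside `S`.
Conversely, if `l` attains its maximum `M` over `P(G)` on the face `F`, then `F` is the convex hull
of the simple cycles with `l = M`; let `S` be the union of their edges. A simple cycle `C` inside
`S` also has `l = M`: for the edge weights `l(1_e) - M` all simple cycles have weight `≤ 0` and
those with `l = M` weight `0`. Adding up one such cycle through each edge of `C` gives `C` plus a
balanced multiset of edges, which decomposes into simple cycles and so has weight `≤ 0`; hence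
`C` has weight `≥ 0`. So `F = P(G)_S`. Full subgraphs are determined by `P(G)_S` because each of
their edges lies on a simple cycle inside them.
-/

theorem List.subperm_flatMap_of_forall_mem {l : List E} {f : E → List E}
    (hf : ∀ a ∈ l, a ∈ f a) : l.Subperm (l.flatMap f) := by
  induction l with
  | nil => simp
  | cons a t ih =>
    rw [List.flatMap_cons, ← List.singleton_append]
    exact (List.singleton_subperm_iff.2 (hf a (by simp))).append
      (ih fun b hb => hf b (by simp [hb]))

def IsBalanced (src tgt : E → V) (m : Multiset E) : Prop :=
  m.map src = m.map tgt

section Balanced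

variable {src tgt : E → V}

theorem IsBalanced.add {m n : Multiset E} (hm : IsBalanced src tgt m)
    (hn : IsBalanced src tgt n) : IsBalanced src tgt (m + n) := by
  unfold IsBalanced at *
  rw [Multiset.map_add, Multiset.map_add, hm, hn]

theorem IsBalanced.sub [DecidableEq E] {m n : Multiset E} (hm : IsBalanced src tgt m)
    (hn : IsBalanced src tgt n) (hnm : n ≤ m) : IsBalanced src tgt (m - n) := by
  have h := hm
  rw [IsBalanced, ← tsub_add_cancel_of_le hnm, Multiset.map_add, Multiset.map_add, hn] at h
  exact add_right_cancel h

theorem isBalanced_flatMap {l : List E} {f : E → List E}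
    (hf : ∀ a ∈ l, IsBalanced src tgt (f a)) : IsBalanced src tgt (l.flatMap f) := by
  induction l with
  | nil => rfl
  | cons a t ih =>
    rw [List.flatMap_cons, ← Multiset.coe_add]
    exact (hf a (by simp)).add (ih fun b hb => hf b (by simp [hb]))

theorem map_tgt_eq_of_isChain_s14 : ∀ (l : List E) (hl : l ≠ []),
    l.IsChain (fun a b => tgt a = src b) → l.map tgt = l.tail.map src ++ [tgt (l.getLast hl)]
  | [_], _, _ => rfl
  | a :: b :: t, _, hch => by
    rw [List.map_cons, map_tgt_eq_of_isChain_s14 (b :: t) (by simp) hch.tail, hch.rel]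
    simp

theorem isCycleWalk_cons_iff {a : E} {l : List E} :
    IsCycleWalk src tgt (a :: l) ↔
      (a :: l).IsChain (fun a b => tgt a = src b) ∧ tgt ((a :: l).getLast (by simp)) = src a := by
  simp only [IsCycleWalk, ne_eq, reduceCtorEq, not_false_eq_true, true_and,
    List.getLast?_eq_some_getLast, Option.map_some, List.head?_cons, Option.some.injEq]
  rfl

theorem IsCycleWalk.isBalanced {c : List E} (hc : IsCycleWalk src tgt c) :
    IsBalanced src tgt c := by
  obtain ⟨a, t, rfl⟩ := List.exists_cons_of_ne_nil hc.1
  obtain ⟨hch, hclose⟩ := isCycleWalk_cons_iff.1 hc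
  have hperm : (t.map src ++ [src a]).Perm ((a :: t).map src) := List.perm_append_singleton _ _
  simpa [IsBalanced, map_tgt_eq_of_isChain_s14 _ (by simp) hch, hclose] using
    (Multiset.coe_eq_coe.2 hperm).symm

/-- Grow a path with distinct sources inside `m` until its endpoint reappears as a source;
balance guarantees that an unused edge always leaves the endpoint. -/
theorem IsBalanced.exists_isSimpleCycle_le_of_path {m : Multiset E}
    (hm : IsBalanced src tgt m) (l : List E) (hl : l ≠ [])
    (hch : l.IsChain (fun a b => tgt a = src b)) (hnd : (l.map src).Nodup)
    (hlm : (l : Multiset E) ≤ m) : ∃ d, IsSimpleCycle src tgt d ∧ (d : Multiset E) ≤ m := by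
  classical
  by_cases hv : tgt (l.getLast hl) ∈ l.map src
  · obtain ⟨e, he, hev⟩ := List.mem_map.1 hv
    obtain ⟨p, q, rfl⟩ := List.append_of_mem he
    have hsuf : e :: q <:+ p ++ e :: q := List.suffix_append p (e :: q)
    refine ⟨e :: q, ⟨isCycleWalk_cons_iff.2 ⟨hch.suffix hsuf, ?_⟩,
      hnd.sublist (hsuf.sublist.map src)⟩, (Multiset.coe_le.2 hsuf.sublist.subperm).trans hlm⟩
    rw [hev, List.getLast_append_of_ne_nil]
  · have hvm : tgt (l.getLast hl) ∈ (m - l).map src := by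
      have hmem : tgt (l.getLast hl) ∈ m.map src :=
        hm ▸ Multiset.mem_map_of_mem tgt (Multiset.mem_of_le hlm (by simp [List.getLast_mem]))
      rw [← tsub_add_cancel_of_le hlm, Multiset.map_add, Multiset.mem_add] at hmem
      exact hmem.resolve_right (by simpa using hv)
    obtain ⟨e', he', hsrc⟩ := Multiset.mem_map.1 hvm
    have hle : ((l ++ [e'] : List E) : Multiset E) ≤ m := by
      rw [← Multiset.coe_add, Multiset.coe_singleton, ← add_tsub_cancel_of_le hlm]
      exact add_le_add le_rfl (Multiset.singleton_le.2 he')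
    refine hm.exists_isSimpleCycle_le_of_path (l ++ [e']) (by simp) ?_ ?_ hle
    · refine hch.append (List.isChain_singleton e') fun x hx y hy => ?_
      simp_all [List.getLast?_eq_some_getLast hl]
    · rw [List.map_append, List.map_singleton, hsrc, ← List.concat_eq_append]
      exact hnd.concat hv
termination_by Multiset.card m - l.length
decreasing_by
  have := Multiset.card_le_card hle
  simp only [Multiset.coe_card, List.length_append, List.length_singleton] at this ⊢
  omega

theorem IsBalanced.exists_isSimpleCycle_le {m : Multiset E} (hm : IsBalanced src tgt m)
    (hm0 : m ≠ 0) : ∃ d, IsSimpleCycle src tgt d ∧ (d : Multiset E) ≤ m := by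
  obtain ⟨e, he⟩ := Multiset.exists_mem_of_ne_zero hm0
  exact hm.exists_isSimpleCycle_le_of_path [e] (by simp) (List.isChain_singleton e) (by simp)
    (by simpa using he)

theorem IsBalanced.exists_eq_flatten {m : Multiset E} (hm : IsBalanced src tgt m) :
    ∃ L : List (List E), (∀ d ∈ L, IsSimpleCycle src tgt d) ∧ m = (L.flatten : Multiset E) := by
  classical
  induction m using Multiset.strongInductionOn with
  | ih m ih =>
    rcases eq_or_ne m 0 with rfl | hm0
    · exact ⟨[], by simp, rfl⟩
    obtain ⟨d, hd, hdm⟩ := hm.exists_isSimpleCycle_le hm0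
    have hlt : m - d < m :=
      calc m - d < m - d + d := lt_add_of_pos_right _ (pos_iff_ne_zero.2 (by simpa using hd.1.1))
        _ = m := tsub_add_cancel_of_le hdm
    obtain ⟨L, hL, hmL⟩ := ih _ hlt (hm.sub hd.1.isBalanced hdm)
    refine ⟨d :: L, by simpa [hd] using hL, ?_⟩
    rw [List.flatten_cons, ← Multiset.coe_add, ← hmL, add_tsub_cancel_of_le hdm]

variable {R : Type*} [AddCommGroup R] [PartialOrder R] [IsOrderedAddMonoid R]
  {u : E → R}

theorem IsBalanced.sum_map_nonpos {m : Multiset E} (hm : IsBalanced src tgt m)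
    (hu : ∀ d, IsSimpleCycle src tgt d → (d.map u).sum ≤ 0) : (m.map u).sum ≤ 0 := by
  obtain ⟨L, hL, rfl⟩ := hm.exists_eq_flatten
  rw [Multiset.map_coe, Multiset.sum_coe, List.map_flatten, List.sum_flatten]
  refine (List.sum_le_card_nsmul _ 0 ?_).trans_eq (nsmul_zero _)
  simpa using fun d hd => hu d (hL d hd)

theorem IsCycleWalk.exists_isSimpleCycle_mem {c : List E} (hc : IsCycleWalk src tgt c) {e : E}
    (he : e ∈ c) : ∃ d, IsSimpleCycle src tgt d ∧ e ∈ d ∧ ∀ x ∈ d, x ∈ c := by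
  obtain ⟨L, hL, hcL⟩ := hc.isBalanced.exists_eq_flatten
  have hperm : c.Perm L.flatten := Multiset.coe_eq_coe.1 hcL
  obtain ⟨d, hdL, hed⟩ := List.mem_flatten.1 (hperm.subset he)
  exact ⟨d, hL d hdL, hed, fun x hx => hperm.symm.subset (List.mem_flatten.2 ⟨d, hdL, hx⟩)⟩

/-- The zero-weight cycles through the edges of `c` together contain `c`, and what they leave
over is balanced, hence of nonpositive weight. -/
theorem IsCycleWalk.sum_map_nonneg_of_forall_mem {c : List E} (hc : IsCycleWalk src tgt c)
    (hu : ∀ d, IsSimpleCycle src tgt d → (d.map u).sum ≤ 0)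
    (hcov : ∀ e ∈ c, ∃ d, IsSimpleCycle src tgt d ∧ e ∈ d ∧ (d.map u).sum = 0) :
    0 ≤ (c.map u).sum := by
  classical
  choose! D hD using hcov
  set m : Multiset E := ((c.flatMap D : List E) : Multiset E)
  have hcm : (c : Multiset E) ≤ m :=
    Multiset.coe_le.2 (List.subperm_flatMap_of_forall_mem fun e he => (hD e he).2.1)
  have hbal : IsBalanced src tgt m := isBalanced_flatMap fun e he => (hD e he).1.1.isBalanced
  have hrest := (hbal.sub hc.isBalanced hcm).sum_map_nonpos hu
  have hsum : (m.map u).sum = 0 := by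
    simp only [m, Multiset.map_coe, Multiset.sum_coe, List.flatMap_def, List.map_flatten,
      List.sum_flatten, List.map_map]
    exact List.sum_eq_zero fun x hx => by
      obtain ⟨e, he, rfl⟩ := List.mem_map.1 hx
      exact (hD e he).2.2
  have hsplit : (m.map u).sum = ((m - c).map u).sum + ((c : Multiset E).map u).sum := by
    rw [← Multiset.sum_add, ← Multiset.map_add, tsub_add_cancel_of_le hcm]
  rw [hsum] at hsplit
  exact hsplit ▸ add_le_of_nonpos_left hrest

end Balanced

theorem ContinuousLinearMap.toExposed_eq_of_forall_le {𝕜 : Type*} [TopologicalSpace 𝕜] [Ring 𝕜]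
    [PartialOrder 𝕜] {X : Type*} [AddCommMonoid X] [TopologicalSpace X] [Module 𝕜 X]
    {l : StrongDual 𝕜 X} {A : Set X} {x₀ : X}
    (hx₀ : x₀ ∈ A) (h : ∀ y ∈ A, l y ≤ l x₀) : l.toExposed A = {x ∈ A | l x = l x₀} := by
  ext x
  exact ⟨fun hx => ⟨hx.1, le_antisymm (h x hx.1) (hx.2 x₀ hx₀)⟩,
    fun hx => ⟨hx.1, fun y hy => hx.2 ▸ h y hy⟩⟩

theorem convexHull_inter_eq_of_forall_le {X F : Type*} [AddCommGroup X] [Module ℝ X] [FunLike F X ℝ]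
    [LinearMapClass F ℝ X ℝ]
    {s : Set X} {f : F} {M : ℝ} (hf : ∀ y ∈ s, f y ≤ M) :
    convexHull ℝ (s ∩ {y | f y = M}) = {x ∈ convexHull ℝ s | f x = M} := by
  classical
  refine Set.Subset.antisymm (convexHull_min (fun y hy => ⟨subset_convexHull ℝ s hy.1, hy.2⟩)
    ((convex_convexHull ℝ s).inter (convex_hyperplane (LinearMapClass.linearMap f).isLinear M)))
    ?_
  rintro x ⟨hx, hfx⟩
  obtain ⟨ι, t, w, z, hw0, hw1, hz, rfl⟩ := (convexHull_eq s).subset hx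
  have hsum : ∑ i ∈ t, w i * (M - f (z i)) = 0 := by
    rw [Finset.centerMass_eq_of_sum_1 _ _ hw1, map_sum] at hfx
    simp only [map_smul, smul_eq_mul] at hfx
    simp only [mul_sub, Finset.sum_sub_distrib, ← Finset.sum_mul, hw1, one_mul, hfx, sub_self]
  have hfz : ∀ i ∈ t, w i ≠ 0 → f (z i) = M := fun i hi hwi => by
    have := (Finset.sum_eq_zero_iff_of_nonneg fun j hj =>
      mul_nonneg (hw0 j hj) (sub_nonneg.2 (hf _ (hz j hj)))).1 hsum i hi
    rw [mul_eq_zero, sub_eq_zero] at this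
    exact (this.resolve_left hwi).symm
  rw [← Finset.centerMass_filter_ne_zero]
  refine Finset.centerMass_mem_convexHull _ (fun i hi => hw0 i (Finset.mem_filter.1 hi).1)
    (by rw [Finset.sum_filter_ne_zero, hw1]; exact one_pos) fun i hi => ?_
  obtain ⟨hit, hwi⟩ := Finset.mem_filter.1 hi
  exact ⟨hz i hit, hfz i hit hwi⟩

section OutsideMass

variable {ι : Type*} [Fintype ι]

noncomputable def outsideMass (S : Set ι) : (ι → ℝ) →L[ℝ] ℝ :=
  ∑ i, Sᶜ.indicator (fun i => ContinuousLinearMap.proj i) i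

theorem outsideMass_apply (S : Set ι) (x : ι → ℝ) : outsideMass S x = ∑ i, Sᶜ.indicator x i := by
  simp only [outsideMass, _root_.sum_apply]
  refine Finset.sum_congr rfl fun i _ => ?_
  by_cases hi : i ∈ S <;> simp [hi]

theorem outsideMass_nonneg (S : Set ι) {x : ι → ℝ} (hx : 0 ≤ x) : 0 ≤ outsideMass S x := by
  rw [outsideMass_apply]
  exact Finset.sum_nonneg fun i _ => Set.indicator_nonneg (fun j _ => hx j) i

theorem outsideMass_eq_zero_iff (S : Set ι) {x : ι → ℝ} (hx : 0 ≤ x) :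
    outsideMass S x = 0 ↔ ∀ i ∉ S, x i = 0 := by
  rw [outsideMass_apply, Finset.sum_eq_zero_iff_of_nonneg
    fun i _ => Set.indicator_nonneg (fun j _ => hx j) i]
  simp [Set.indicator_apply_eq_zero]

end OutsideMass

section CycleVec

variable [DecidableEq E]

theorem cycleVec_nonneg (c : List E) : 0 ≤ cycleVec c :=
  fun _ => div_nonneg (Nat.cast_nonneg _) (Nat.cast_nonneg _)

theorem cycleVec_eq_zero_iff {c : List E} {e : E} : cycleVec c e = 0 ↔ e ∉ c := by
  simp only [cycleVec, div_eq_zero_iff, Nat.cast_eq_zero, List.count_eq_zero,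
    List.length_eq_zero_iff, or_iff_left_iff_imp]
  rintro rfl
  exact List.not_mem_nil

theorem List.sum_map_single_one (c : List E) :
    (c.map fun e => (Pi.single e 1 : E → ℝ)).sum = fun e => (c.count e : ℝ) := by
  induction c with
  | nil => ext; simp
  | cons a t ih =>
    ext e
    by_cases h : e = a
    · simp [h, ih, add_comm]
    · simp [h, ih, List.count_cons_of_ne (Ne.symm h)]

theorem map_cycleVec {F : Type*} [FunLike F (E → ℝ) ℝ] [LinearMapClass F ℝ (E → ℝ) ℝ] (l : F)
    (c : List E) : l (cycleVec c) = (c.map fun e => l (Pi.single e 1)).sum / c.length := by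
  have : cycleVec c = (c.length : ℝ)⁻¹ • (c.map fun e => (Pi.single e 1 : E → ℝ)).sum := by
    rw [List.sum_map_single_one]
    ext e
    simp [cycleVec, div_eq_inv_mul]
  rw [this, map_smul, map_list_sum, List.map_map, smul_eq_mul, inv_mul_eq_div]
  rfl

theorem sum_map_sub_eq_length_mul {F : Type*} [FunLike F (E → ℝ) ℝ] [LinearMapClass F ℝ (E → ℝ) ℝ]
    (l : F) (M : ℝ) (c : List E) :
    (c.map fun e => l (Pi.single e 1) - M).sum = c.length * (l (cycleVec c) - M) := by
  rcases eq_or_ne c [] with rfl | hc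
  · simp
  rw [map_cycleVec, mul_sub, mul_div_cancel₀ _ (by simpa using hc)]
  clear hc
  induction c with
  | nil => simp
  | cons a t ih =>
    simp only [List.map_cons, List.sum_cons, ih, List.length_cons]
    push_cast
    ring

end CycleVec

section Polytope

variable [DecidableEq E] {src tgt : E → V}

theorem nonneg_of_mem_cyclePolytope {x : E → ℝ} (hx : x ∈ cyclePolytope src tgt) : 0 ≤ x :=
  convexHull_min (by rintro _ ⟨c, -, rfl⟩; exact cycleVec_nonneg c) (convex_Ici 0) hx

theorem IsSimpleCycle.cycleVec_mem_cyclePolytope {c : List E} (hc : IsSimpleCycle src tgt c) :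
    cycleVec c ∈ cyclePolytope src tgt :=
  subset_convexHull ℝ _ ⟨c, hc, rfl⟩

theorem IsSimpleCycle.cycleVec_mem_polytopeRestrict_iff {c : List E}
    (hc : IsSimpleCycle src tgt c) {S : Set E} :
    cycleVec c ∈ polytopeRestrict src tgt S ↔ ∀ e ∈ c, e ∈ S := by
  simp only [polytopeRestrict, Set.mem_ofPred_eq, cycleVec_eq_zero_iff,
    hc.cycleVec_mem_cyclePolytope, true_and]
  exact ⟨fun h e he => by_contra fun heS => h e heS he, fun h e heS he => heS (h e he)⟩

theorem polytopeRestrict_mono {S₁ S₂ : Set E} (h : S₁ ⊆ S₂) :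
    polytopeRestrict src tgt S₁ ⊆ polytopeRestrict src tgt S₂ :=
  fun _ hx => ⟨hx.1, fun e he => hx.2 e fun he₁ => he (h he₁)⟩

theorem IsFullSubgraph.subset_of_polytopeRestrict_subset {S₁ S₂ : Set E}
    (hS₁ : IsFullSubgraph src tgt S₁)
    (h : polytopeRestrict src tgt S₁ ⊆ polytopeRestrict src tgt S₂) : S₁ ⊆ S₂ := by
  intro e he
  obtain ⟨c, hc, hcS, hec⟩ := hS₁ e he
  obtain ⟨d, hd, hed, hdc⟩ := hc.exists_isSimpleCycle_mem hec
  exact hd.cycleVec_mem_polytopeRestrict_iff.1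
    (h (hd.cycleVec_mem_polytopeRestrict_iff.2 fun x hx => hcS x (hdc x hx))) e hed

theorem IsSimpleCycle.map_cycleVec_eq_of_forall_mem {F : Type*} [FunLike F (E → ℝ) ℝ]
    [LinearMapClass F ℝ (E → ℝ) ℝ] {l : F} {M : ℝ}
    (hmax : ∀ d, IsSimpleCycle src tgt d → l (cycleVec d) ≤ M) {c : List E}
    (hc : IsSimpleCycle src tgt c)
    (hcov : ∀ e ∈ c, ∃ d, IsSimpleCycle src tgt d ∧ e ∈ d ∧ l (cycleVec d) = M) :
    l (cycleVec c) = M := by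
  refine le_antisymm (hmax c hc) ?_
  have hnonneg := hc.1.sum_map_nonneg_of_forall_mem (u := fun e => l (Pi.single e 1) - M)
    (fun d hd => by
      rw [sum_map_sub_eq_length_mul]
      exact mul_nonpos_of_nonneg_of_nonpos (Nat.cast_nonneg _) (sub_nonpos.2 (hmax d hd)))
    (fun e he => by
      obtain ⟨d, hd, hed, hdM⟩ := hcov e he
      exact ⟨d, hd, hed, by rw [sum_map_sub_eq_length_mul, hdM, sub_self, mul_zero]⟩)
  rw [sum_map_sub_eq_length_mul] at hnonneg
  have hlen : (0 : ℝ) < c.length := by simpa [List.length_pos_iff] using hc.1.1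
  exact sub_nonneg.1 ((mul_nonneg_iff_of_pos_left hlen).1 hnonneg)

variable [Fintype E]

theorem polytopeRestrict_eq_setOf (S : Set E) :
    polytopeRestrict src tgt S = {x ∈ cyclePolytope src tgt | (-outsideMass S) x = 0} := by
  ext x
  simp only [polytopeRestrict, Set.mem_ofPred_eq, neg_apply, neg_eq_zero]
  exact and_congr_right fun hx => (outsideMass_eq_zero_iff S (nonneg_of_mem_cyclePolytope hx)).symm

theorem polytopeRestrict_eq_convexHull (S : Set E) :
    polytopeRestrict src tgt S =
      convexHull ℝ {x | ∃ c, IsSimpleCycle src tgt c ∧ (∀ e ∈ c, e ∈ S) ∧ x = cycleVec c} := by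
  rw [polytopeRestrict_eq_setOf, cyclePolytope, ← convexHull_inter_eq_of_forall_le]
  · congr 1
    ext x
    constructor
    · rintro ⟨⟨c, hc, rfl⟩, hcS⟩
      refine ⟨c, hc, hc.cycleVec_mem_polytopeRestrict_iff.1 ?_, rfl⟩
      rw [polytopeRestrict_eq_setOf]
      exact ⟨hc.cycleVec_mem_cyclePolytope, hcS⟩
    · rintro ⟨c, hc, hcS, rfl⟩
      have := hc.cycleVec_mem_polytopeRestrict_iff.2 hcS
      rw [polytopeRestrict_eq_setOf] at this
      exact ⟨⟨c, hc, rfl⟩, this.2⟩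
  · rintro _ ⟨c, -, rfl⟩
    exact neg_nonpos.2 (outsideMass_nonneg S (cycleVec_nonneg c))

theorem polytopeRestrict_empty : polytopeRestrict src tgt (∅ : Set E) = ∅ := by
  rw [polytopeRestrict_eq_convexHull, convexHull_eq_empty, Set.eq_empty_iff_forall_notMem]
  rintro _ ⟨c, hc, hcS, -⟩
  obtain ⟨e, he⟩ := List.exists_mem_of_ne_nil c hc.1.1
  exact hcS e he

theorem isExposed_polytopeRestrict (S : Set E) :
    IsExposed ℝ (cyclePolytope src tgt) (polytopeRestrict src tgt S) := by
  rintro ⟨x₀, hx₀⟩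
  rw [polytopeRestrict_eq_setOf] at hx₀ ⊢
  have hle : ∀ y ∈ cyclePolytope src tgt, (-outsideMass S) y ≤ (-outsideMass S) x₀ :=
    fun y hy => hx₀.2 ▸ neg_nonpos.2 (outsideMass_nonneg S (nonneg_of_mem_cyclePolytope hy))
  refine ⟨-outsideMass S, ?_⟩
  change _ = (-outsideMass S).toExposed _
  rw [ContinuousLinearMap.toExposed_eq_of_forall_le hx₀.1 hle, hx₀.2]

theorem IsExposed.exists_polytopeRestrict_eq {F : Set (E → ℝ)}
    (hF : IsExposed ℝ (cyclePolytope src tgt) F) :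
    ∃ S, IsFullSubgraph src tgt S ∧ polytopeRestrict src tgt S = F := by
  rcases F.eq_empty_or_nonempty with rfl | hne
  · exact ⟨∅, fun e he => he.elim, polytopeRestrict_empty⟩
  obtain ⟨l, rfl⟩ := hF hne
  obtain ⟨x₀, hx₀P, hx₀⟩ := hne
  have hmax : ∀ d, IsSimpleCycle src tgt d → l (cycleVec d) ≤ l x₀ :=
    fun d hd => hx₀ _ hd.cycleVec_mem_cyclePolytope
  refine ⟨{e | ∃ d, IsSimpleCycle src tgt d ∧ e ∈ d ∧ l (cycleVec d) = l x₀},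
    fun e ⟨d, hd, hed, hdM⟩ => ⟨d, hd.1, fun e' he' => ⟨d, hd, he', hdM⟩, hed⟩, ?_⟩
  change _ = l.toExposed _
  rw [ContinuousLinearMap.toExposed_eq_of_forall_le hx₀P hx₀, cyclePolytope,
    ← convexHull_inter_eq_of_forall_le (by rintro _ ⟨d, hd, rfl⟩; exact hmax d hd),
    polytopeRestrict_eq_convexHull]
  congr 1
  ext x
  constructor
  · rintro ⟨c, hc, hcS, rfl⟩
    exact ⟨⟨c, hc, rfl⟩, hc.map_cycleVec_eq_of_forall_mem hmax hcS⟩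
  · rintro ⟨⟨c, hc, rfl⟩, hcM⟩
    exact ⟨c, hc, fun e he => ⟨c, hc, he, hcM⟩, rfl⟩

end Polytope

/-- The map `H ↦ P(G)_H` is an order-preserving bijection from the poset of full subgraphs
of `G` (ordered by inclusion of edge sets) onto the face poset of the cycle polytope `P(G)`
(faces = exposed faces, ordered by inclusion): every `P(G)_H` is a face, every face is
`P(G)_H` for a unique full subgraph `H`, and inclusions correspond to inclusions. -/
theorem cyclePolytope_facePoset
    [Fintype E] [DecidableEq E] (src tgt : E → V) :
    (∀ S : Set E, IsFullSubgraph src tgt S →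
        IsExposed ℝ (cyclePolytope src tgt) (polytopeRestrict src tgt S)) ∧
    (∀ F : Set (E → ℝ), IsExposed ℝ (cyclePolytope src tgt) F →
        ∃! S : Set E, IsFullSubgraph src tgt S ∧ polytopeRestrict src tgt S = F) ∧
    (∀ S₁ S₂ : Set E, IsFullSubgraph src tgt S₁ → IsFullSubgraph src tgt S₂ →
        (S₁ ⊆ S₂ ↔ polytopeRestrict src tgt S₁ ⊆ polytopeRestrict src tgt S₂)) := by
  refine ⟨fun S _ => isExposed_polytopeRestrict S, fun F hF => ?_,
    fun S₁ S₂ hS₁ _ => ⟨polytopeRestrict_mono, hS₁.subset_of_polytopeRestrict_subset⟩⟩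
  obtain ⟨S, hS, rfl⟩ := hF.exists_polytopeRestrict_eq
  exact ⟨S, ⟨hS, rfl⟩, fun S' ⟨hS', h⟩ => (hS'.subset_of_polytopeRestrict_subset h.le).antisymm
    (hS.subset_of_polytopeRestrict_subset h.ge)⟩
end
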